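/- arXiv:2102.01194 — 2 statements merged into one kernel-verified Lean document; each statement's English description precedes it below -/
import Mathlib

section
/- Let σ : ℝ → ℝ be infinitely differentiable and not equal to any polynomial. Then for every dimension d ≥ 1, every continuous function f : [0,1]^d → ℝ, and every ε > 0, there exist an integer m ≥ 1, coefficients a_1,…,a_m ∈ ℝ, weight vectors w_1,…,w_m ∈ ℝ^d, and biases b_1,…,b_m ∈ ℝ such that sup_{x ∈ [0,1]^d} | f(x) − ∑_{i=1}^m a_i σ(w_i · x + b_i) | ≤ ε. -/
open scoped BigOperators


open Polynomial in
lemma UA.antideriv (q : Polynomial ℝ) : ∃ p : Polynomial ℝ, p.derivative = q := by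
  refine ⟨q.sum fun n a => C (a / (n + 1)) * X ^ (n + 1), ?_⟩
  rw [Polynomial.sum, map_sum]
  have : ∀ n ∈ q.support, Polynomial.derivative (C (q.coeff n / (n+1)) * X ^ (n+1))
      = C (q.coeff n) * X ^ n := by
    intro n _
    rw [Polynomial.derivative_C_mul_X_pow]
    norm_num
    have hcast : ((n : Polynomial ℝ) + 1) = Polynomial.C ((n : ℝ) + 1) := by simp [map_add, map_natCast]
    rw [hcast, ← Polynomial.C_mul, div_mul_cancel₀]
    positivity
  rw [Finset.sum_congr rfl this]
  exact q.sum_C_mul_X_pow_eq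

lemma UA.exists_poly : ∀ (k : ℕ) (f : ℝ → ℝ), ContDiff ℝ (⊤ : ℕ∞) f →
    (∀ t, iteratedDeriv k f t = 0) → ∃ p : Polynomial ℝ, ∀ t, f t = p.eval t := by
  intro k
  induction k with
  | zero =>
    intro f _ h
    exact ⟨0, by simpa using h⟩
  | succ k ih =>
    intro f hf h
    obtain ⟨q, hq⟩ := ih (deriv f) (contDiff_infty_iff_deriv.mp hf).2
      (fun t => by rw [← iteratedDeriv_succ']; exact h t)
    obtain ⟨p₀, hp₀⟩ := UA.antideriv q
    have hder : ∀ t, deriv (fun t => f t - p₀.eval t) t = 0 := by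
      intro t
      have h1 : HasDerivAt (fun t => p₀.eval t) (q.eval t) t := by
        simpa [hp₀] using p₀.hasDerivAt t
      have h2 : HasDerivAt f (deriv f t) t :=
        ((contDiff_infty_iff_deriv.mp hf).1 t).hasDerivAt
      have := (h2.sub h1).deriv
      rw [show (fun t => f t - Polynomial.eval t p₀) = (f - fun t => Polynomial.eval t p₀) from rfl, this, hq, sub_self]
    have hdiff : Differentiable ℝ (fun t => f t - p₀.eval t) :=
      (contDiff_infty_iff_deriv.mp hf).1.sub (Polynomial.differentiable p₀)
    refine ⟨p₀ + Polynomial.C (f 0 - p₀.eval 0), fun t => ?_⟩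
    have := is_const_of_deriv_eq_zero hdiff hder t 0
    simp only [Polynomial.eval_add, Polynomial.eval_C]
    linarith

lemma UA.exists_deriv_ne (σ : ℝ → ℝ) (hσ : ContDiff ℝ (⊤:ℕ∞) σ)
    (hnp : ¬ ∃ p : Polynomial ℝ, ∀ t : ℝ, σ t = p.eval t) (k : ℕ) :
    ∃ b, iteratedDeriv k σ b ≠ 0 := by
  by_contra hc
  push_neg at hc
  exact hnp (UA.exists_poly k σ hσ hc)

open fwdDiff Finset

lemma UA.fwdDiff_iter_zero_fun (s : ℝ) (k : ℕ) :
    (fwdDiff s)^[k] (fun _ : ℝ => (0:ℝ)) = fun _ => 0 := by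
  induction k with
  | zero => rfl
  | succ k ih => rw [Function.iterate_succ_apply, fwdDiff_const]; exact ih

open Polynomial in
lemma UA.fwdDiff_poly_eval (s : ℝ) (p : Polynomial ℝ) :
    fwdDiff s (fun t => p.eval t) = fun t => (p.comp (X + C s) - p).eval t := by
  funext t
  simp [fwdDiff, eval_comp]

open Polynomial in
lemma UA.fwdDiff_iter_poly_zero : ∀ (k : ℕ) (s : ℝ) (p : Polynomial ℝ), p.natDegree < k →
    (fwdDiff s)^[k] (fun t => p.eval t) = fun _ => 0 := by
  intro k
  induction k with
  | zero => omega
  | succ k ih =>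
    intro s p hp
    rw [Function.iterate_succ_apply, UA.fwdDiff_poly_eval]
    rcases eq_or_ne p.natDegree 0 with h0 | h0
    · obtain ⟨c, rfl⟩ := Polynomial.natDegree_eq_zero.mp h0
      simpa using UA.fwdDiff_iter_zero_fun s k
    · have hp0 : p ≠ 0 := fun h => h0 (by simp [h])
      have hlc : (p.comp (X + C s)).leadingCoeff = p.leadingCoeff := by
        rw [leadingCoeff_comp (by simp), (monic_X_add_C s).leadingCoeff, one_pow, mul_one]
      have hdc : (p.comp (X + C s)).natDegree = p.natDegree := by
        rw [natDegree_comp, natDegree_X_add_C, mul_one]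
      have hc0 : p.comp (X + C s) ≠ 0 := fun h => by
        rw [h] at hlc; exact hp0 (leadingCoeff_eq_zero.mp hlc.symm ▸ rfl)
      have hdeg : (p.comp (X + C s) - p).degree < p.degree := by
        have h := Polynomial.degree_sub_lt
          (by rw [degree_eq_natDegree hc0, degree_eq_natDegree hp0, hdc]) hc0 hlc
        rwa [degree_eq_natDegree hc0, hdc, ← degree_eq_natDegree hp0] at h
      apply ih s
      rcases eq_or_ne (p.comp (X + C s) - p) 0 with hq | hq
      · rw [hq]; simpa using Nat.pos_of_ne_zero h0 |>.trans_le (Nat.lt_succ_iff.mp hp)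
      · have : (p.comp (X + C s) - p).natDegree < p.natDegree :=
          Polynomial.natDegree_lt_natDegree hq hdeg
        omega

open Polynomial in
lemma UA.fwdDiff_iter_pow_lt (k i : ℕ) (s : ℝ) (h : i < k) :
    (fwdDiff s)^[k] (fun t : ℝ => t ^ i) = fun _ => 0 := by
  have := UA.fwdDiff_iter_poly_zero k s (X ^ i) (by simpa using h)
  simpa using this

lemma UA.fwdDiff_iter_pow : ∀ (k : ℕ) (s : ℝ),
    (fwdDiff s)^[k] (fun t : ℝ => t ^ k) = fun _ => (k.factorial : ℝ) * s ^ k := by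
  intro k
  induction k with
  | zero => intro s; funext t; simp
  | succ k ih =>
    intro s
    rw [Function.iterate_succ_apply]
    have h1 : fwdDiff s (fun t : ℝ => t ^ (k+1))
        = ∑ i ∈ range (k+1), (((k+1).choose i : ℝ) * s ^ (k+1-i)) • (fun t : ℝ => t ^ i) := by
      funext t
      simp only [fwdDiff, Finset.sum_apply, Pi.smul_apply, smul_eq_mul]
      rw [add_pow]
      rw [Finset.sum_range_succ]
      simp only [Nat.choose_self, Nat.cast_one, mul_one, Nat.sub_self, pow_zero]
      rw [add_sub_cancel_right]
      exact Finset.sum_congr rfl fun i _ => by ring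
    rw [h1, fwdDiff_iter_finset_sum, Finset.sum_range_succ]
    have h2 : ∀ i ∈ range k, (fwdDiff s)^[k] ((((k+1).choose i : ℝ) * s ^ (k+1-i)) • (fun t : ℝ => t ^ i))
        = fun _ => 0 := by
      intro i hi
      rw [fwdDiff_iter_const_smul, UA.fwdDiff_iter_pow_lt k i s (Finset.mem_range.mp hi)]
      funext t; simp
    rw [Finset.sum_congr rfl h2, fwdDiff_iter_const_smul, ih s]
    funext t
    simp only [Finset.sum_apply, Pi.add_apply, Pi.smul_apply, smul_eq_mul]
    rw [Finset.sum_const, Nat.choose_succ_self_right]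
    simp [Nat.factorial_succ]
    ring

lemma UA.iteratedDerivWithin_Icc (f : ℝ → ℝ) (hf : ContDiff ℝ (⊤:ℕ∞) f) {a b : ℝ}
    (hab : a < b) (n : ℕ) {x : ℝ} (hx : x ∈ Set.Icc a b) :
    iteratedDerivWithin n f (Set.Icc a b) x = iteratedDeriv n f x := by
  have h1 : HasFTaylorSeriesUpToOn (⊤:ℕ∞) f (ftaylorSeries ℝ f) (Set.Icc a b) :=
    (contDiff_iff_ftaylorSeries.mp hf).hasFTaylorSeriesUpToOn _
  have h2 := h1.eq_iteratedFDerivWithin_of_uniqueDiffOn (m := n)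
    (by exact_mod_cast le_top) (uniqueDiffOn_Icc hab) hx
  rw [iteratedDerivWithin_eq_iteratedFDerivWithin, iteratedDeriv_eq_iteratedFDeriv, ← h2]
  rfl

lemma UA.taylor_bound_right (f : ℝ → ℝ) (hf : ContDiff ℝ (⊤:ℕ∞) f) (k : ℕ) (b R M : ℝ)
    (hR : 0 < R) (hM : ∀ y ∈ Set.Icc b (b+R), |iteratedDeriv (k+1) f y| ≤ M)
    {s : ℝ} (hs0 : 0 ≤ s) (hsR : s ≤ R) :
    |f (b+s) - ∑ i ∈ Finset.range (k+1), (s^i / i.factorial) * iteratedDeriv i f b|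
      ≤ M * s^(k+1) / k.factorial := by
  have hab : b ≤ b + R := by linarith
  have hab' : b < b + R := by linarith
  have hx : b + s ∈ Set.Icc b (b+R) := by constructor <;> linarith
  have hf' : ContDiffOn ℝ (k+1) f (Set.Icc b (b+R)) :=
    (hf.of_le (by exact_mod_cast le_top)).contDiffOn
  have hC : ∀ y ∈ Set.Icc b (b+R),
      ‖iteratedDerivWithin (k+1) f (Set.Icc b (b+R)) y‖ ≤ M := by
    intro y hy
    rw [UA.iteratedDerivWithin_Icc f hf hab' _ hy, Real.norm_eq_abs]
    exact hM y hy
  have h := taylor_mean_remainder_bound hab hf' hx hC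
  rw [taylor_within_apply] at h
  have hsum : ∀ i ∈ Finset.range (k+1),
      (((i.factorial:ℝ))⁻¹ * ((b+s) - b)^i) • iteratedDerivWithin i f (Set.Icc b (b+R)) b
      = (s^i / i.factorial) * iteratedDeriv i f b := by
    intro i _
    rw [UA.iteratedDerivWithin_Icc f hf hab' _ (Set.left_mem_Icc.mpr hab)]
    simp only [smul_eq_mul]
    ring
  rw [Finset.sum_congr rfl hsum] at h
  rw [Real.norm_eq_abs] at h
  calc |f (b+s) - ∑ i ∈ Finset.range (k+1), (s^i / i.factorial) * iteratedDeriv i f b|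
      ≤ M * ((b+s) - b)^(k+1) / k.factorial := h
    _ = M * s^(k+1) / k.factorial := by ring_nf

lemma UA.taylor_bound (f : ℝ → ℝ) (hf : ContDiff ℝ (⊤:ℕ∞) f) (k : ℕ) (b R M : ℝ)
    (hR : 0 < R) (hM : ∀ y ∈ Set.Icc (b-R) (b+R), |iteratedDeriv (k+1) f y| ≤ M)
    {s : ℝ} (hs : |s| ≤ R) :
    |f (b+s) - ∑ i ∈ Finset.range (k+1), (s^i / i.factorial) * iteratedDeriv i f b|
      ≤ M * |s|^(k+1) / k.factorial := by
  rcases le_or_gt 0 s with hs0 | hs0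
  · rw [abs_of_nonneg hs0]
    exact UA.taylor_bound_right f hf k b R M hR
      (fun y hy => hM y ⟨by linarith [hy.1], hy.2⟩) hs0 ((le_abs_self s).trans hs)
  · set g : ℝ → ℝ := fun t => f (2*b + -t) with hgdef
    have hg : ContDiff ℝ (⊤:ℕ∞) g := hf.comp (contDiff_const.add contDiff_neg)
    have hgiter : ∀ (n : ℕ) (t : ℝ), iteratedDeriv n g t = (-1)^n * iteratedDeriv n f (2*b - t) := by
      intro n t
      have e1 : g = (fun z => f (2*b + z)) ∘ (fun t => -t) := rfl
      rw [hgdef]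
      have := iteratedDeriv_comp_neg n (fun z => f (2*b + z)) t
      have e2 : (fun x : ℝ => f (2*b + -x)) = fun x : ℝ => (fun z => f (2*b + z)) (-x) := rfl
      rw [e2, this, iteratedDeriv_comp_const_add]
      simp [smul_eq_mul, sub_eq_add_neg]
    have hMg : ∀ y ∈ Set.Icc b (b+R), |iteratedDeriv (k+1) g y| ≤ M := by
      intro y hy
      rw [hgiter]
      rw [abs_mul, abs_pow, abs_neg, abs_one, one_pow, one_mul]
      exact hM _ ⟨by linarith [hy.2], by linarith [hy.1]⟩
    have hs0' : 0 ≤ -s := by linarith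
    have hsR' : -s ≤ R := by rw [abs_of_neg hs0] at hs; linarith
    have h := UA.taylor_bound_right g hg k b R M hR hMg hs0' hsR'
    have e3 : g (b + -s) = f (b + s) := by rw [hgdef]; ring_nf
    have e4 : ∀ i, ((-s)^i / (i.factorial:ℝ)) * iteratedDeriv i g b
        = (s^i / i.factorial) * iteratedDeriv i f b := by
      intro i
      rw [hgiter, show (2*b - b) = b by ring, neg_pow]
      ring_nf
      rw [mul_comm i 2, pow_mul]
      norm_num
    rw [e3] at h
    rw [Finset.sum_congr rfl (fun i _ => e4 i)] at h
    rwa [abs_of_neg hs0]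

open Finset

lemma UA.sum_supersets (k : ℕ) (T : Finset (Fin k)) :
    ∑ S ∈ univ.powerset.filter (fun S => T ⊆ S), (-1:ℝ)^(k - S.card)
      = if T = univ then 1 else 0 := by
  have h1 : ∑ S ∈ univ.powerset.filter (fun S => T ⊆ S), (-1:ℝ)^(k - S.card)
      = ∑ V ∈ Tᶜ.powerset, (-1:ℝ)^V.card := by
    refine Finset.sum_nbij' (fun S => Sᶜ) (fun V => Vᶜ) ?_ ?_ ?_ ?_ ?_
    · intro S hS
      simp only [mem_filter, mem_powerset] at hS
      simpa [Finset.mem_powerset] using Finset.compl_subset_compl.mpr hS.2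
    · intro V hV
      simp only [Finset.mem_powerset] at hV
      simp only [mem_filter, mem_powerset]
      exact ⟨Finset.subset_univ _, by simpa using Finset.compl_subset_compl.mpr hV⟩
    · intro S _; simp
    · intro V _; simp
    · intro S _
      congr 1
      rw [Finset.card_compl]
      simp
  rw [h1]
  have := @Finset.sum_powerset_neg_one_pow_card (Fin k) _ Tᶜ
  have h2 : ∑ V ∈ Tᶜ.powerset, (-1:ℝ)^V.card
      = ((∑ V ∈ Tᶜ.powerset, (-1:ℤ)^V.card : ℤ) : ℝ) := by push_cast; rfl
  rw [h2, this]
  rcases eq_or_ne T univ with h | h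
  · simp [h]
  · rw [if_neg h, if_neg (by simpa [Finset.compl_eq_empty_iff] using h)]
    simp

lemma UA.polarization (k : ℕ) (u : Fin k → ℝ) :
    (k.factorial : ℝ) * ∏ i, u i
      = ∑ S ∈ (univ : Finset (Fin k)).powerset, (-1:ℝ)^(k - S.card) * (∑ i ∈ S, u i)^k := by
  classical
  have hpow : ∀ S : Finset (Fin k), (∑ i ∈ S, u i)^k
      = ∑ g ∈ Fintype.piFinset (fun _ : Fin k => S), ∏ t, u (g t) := by
    intro S
    rw [← Finset.prod_univ_sum (fun _ => S) (fun _ j => u j)]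
    rw [Finset.prod_const, Finset.card_univ, Fintype.card_fin]
  have hfilter : ∀ S : Finset (Fin k), Fintype.piFinset (fun _ : Fin k => S)
      = univ.filter (fun g : Fin k → Fin k => Finset.image g univ ⊆ S) := by
    intro S; ext g; simp [Fintype.mem_piFinset, Finset.image_subset_iff]
  calc (k.factorial : ℝ) * ∏ i, u i
      = ∑ g ∈ univ.filter (fun g : Fin k → Fin k => Finset.image g univ = univ),
          ∏ t, u (g t) := by
        have hbij : ∀ g : Fin k → Fin k, g ∈ univ.filter
            (fun g : Fin k → Fin k => Finset.image g univ = univ) → Function.Bijective g := by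
          intro g hg
          rw [Finset.mem_filter] at hg
          have hsurj : Function.Surjective g := by
            intro y
            have : y ∈ Finset.image g univ := by rw [hg.2]; exact Finset.mem_univ y
            obtain ⟨x, _, hx⟩ := Finset.mem_image.mp this
            exact ⟨x, hx⟩
          exact Fintype.bijective_iff_surjective_and_card g |>.mpr ⟨hsurj, rfl⟩
        have hb : ∑ _e ∈ (univ : Finset (Equiv.Perm (Fin k))), ∏ i, u i
            = ∑ g ∈ univ.filter (fun g : Fin k → Fin k => Finset.image g univ = univ),
              ∏ t, u (g t) := by
          refine Finset.sum_bij' (fun e _ => ⇑e) (fun g hg => Equiv.ofBijective g (hbij g hg))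
            ?_ ?_ ?_ ?_ ?_
          · intro e _
            rw [Finset.mem_filter]
            refine ⟨Finset.mem_univ _, Finset.univ_subset_iff.mp fun y _ => ?_⟩
            exact Finset.mem_image.mpr ⟨e.symm y, Finset.mem_univ _, e.apply_symm_apply y⟩
          · intro g hg; exact Finset.mem_univ _
          · intro e _; exact Equiv.ext fun x => rfl
          · intro g _; rfl
          · intro e _; exact (Equiv.prod_comp e u).symm
        rw [← hb, Finset.sum_const, Finset.card_univ, Fintype.card_perm, Fintype.card_fin,
          nsmul_eq_mul]
    _ = ∑ S ∈ (univ : Finset (Fin k)).powerset, (-1:ℝ)^(k - S.card) * (∑ i ∈ S, u i)^k := by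
        simp_rw [hpow, hfilter, Finset.mul_sum, Finset.sum_filter]
        rw [Finset.sum_comm]
        have hinner : ∀ g : Fin k → Fin k,
            ∑ S ∈ (univ : Finset (Fin k)).powerset,
              (if Finset.image g univ ⊆ S then (-1:ℝ)^(k - S.card) * ∏ t, u (g t) else 0)
            = (if Finset.image g univ = univ then 1 else 0) * ∏ t, u (g t) := by
          intro g
          rw [← UA.sum_supersets k (Finset.image g univ)]
          rw [Finset.sum_filter, Finset.sum_mul]
          refine Finset.sum_congr rfl fun S _ => ?_
          split <;> simp
        rw [Finset.sum_congr rfl (fun g _ => hinner g)]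
        simp only [ite_mul, one_mul, zero_mul]

noncomputable section
open Finset in

lemma UA.key_estimate (σ : ℝ → ℝ) (hσ : ContDiff ℝ (⊤:ℕ∞) σ) (k : ℕ) (b R M : ℝ)
    (hc0 : iteratedDeriv k σ b ≠ 0) (hR : 0 < R) (hM0 : 0 ≤ M)
    (hM : ∀ y ∈ Set.Icc (b-R) (b+R), |iteratedDeriv (k+1) σ y| ≤ M)
    (u h : ℝ) (hh : 0 < h) (hh1 : h ≤ 1) (hu : (k:ℝ) * |u| ≤ R) :
    |(1/(iteratedDeriv k σ b * h^k)) * (fwdDiff (h*u))^[k] (fun t => σ (b+t)) 0 - u^k|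
      ≤ (2^k * M * R^(k+1) / k.factorial) / |iteratedDeriv k σ b| * h := by
  set c := iteratedDeriv k σ b with hcdef
  set s := h * u with hsdef
  set P : ℝ → ℝ := fun t => ∑ i ∈ Finset.range (k+1),
    (iteratedDeriv i σ b / i.factorial) * t^i with hPdef
  set rem : ℝ → ℝ := fun t => σ (b+t) - P t with hremdef
  have hsplit : (fun t => σ (b+t)) = P + rem := by
    funext t; simp [hremdef]
  -- forward difference of P
  have hP : (fwdDiff s)^[k] P 0 = c * s^k := by
    have : P = ∑ i ∈ Finset.range (k+1),
        (iteratedDeriv i σ b / i.factorial) • (fun t : ℝ => t^i) := by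
      funext t; simp [hPdef, Finset.sum_apply]
    rw [this, fwdDiff_iter_finset_sum, Finset.sum_range_succ]
    have hz : ∀ i ∈ Finset.range k,
        (fwdDiff s)^[k] ((iteratedDeriv i σ b / i.factorial) • (fun t : ℝ => t^i))
        = fun _ => 0 := by
      intro i hi
      rw [fwdDiff_iter_const_smul, UA.fwdDiff_iter_pow_lt k i s (Finset.mem_range.mp hi)]
      funext t; simp
    rw [Finset.sum_congr rfl hz, fwdDiff_iter_const_smul, UA.fwdDiff_iter_pow k s]
    simp only [Finset.sum_apply, Pi.add_apply, Pi.smul_apply, smul_eq_mul, Finset.sum_const]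
    field_simp
    ring
  -- forward difference of rem
  have hrem_pt : ∀ j : ℕ, j ≤ k → |rem ((j:ℝ) * s)| ≤ M * R^(k+1) * h^(k+1) / k.factorial := by
    intro j hj
    have habs : |(j:ℝ) * s| ≤ R * h := by
      rw [abs_mul, hsdef, abs_mul, abs_of_nonneg hh.le, Nat.abs_cast]
      have h1 : (j:ℝ) ≤ (k:ℝ) := by exact_mod_cast hj
      have h2 : (j:ℝ) * |u| ≤ R :=
        le_trans (mul_le_mul_of_nonneg_right h1 (abs_nonneg u)) hu
      calc (j:ℝ) * (h * |u|) = ((j:ℝ) * |u|) * h := by ring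
        _ ≤ R * h := mul_le_mul_of_nonneg_right h2 hh.le
    have hRh : |(j:ℝ) * s| ≤ R := by
      calc |(j:ℝ)*s| ≤ R * h := habs
        _ ≤ R * 1 := by nlinarith
        _ = R := mul_one R
    have ht := UA.taylor_bound σ hσ k b R M hR hM hRh
    have : rem ((j:ℝ)*s) = σ (b + (j:ℝ)*s) - ∑ i ∈ Finset.range (k+1),
        (((j:ℝ)*s)^i / i.factorial) * iteratedDeriv i σ b := by
      simp only [hremdef, hPdef]
      congr 1
      exact Finset.sum_congr rfl fun i _ => by ring
    rw [this]
    calc |σ (b + (j:ℝ)*s) - ∑ i ∈ Finset.range (k+1),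
          (((j:ℝ)*s)^i / i.factorial) * iteratedDeriv i σ b|
        ≤ M * |(j:ℝ)*s|^(k+1) / k.factorial := ht
      _ ≤ M * (R*h)^(k+1) / k.factorial := by gcongr
      _ = M * R^(k+1) * h^(k+1) / k.factorial := by rw [mul_pow]; ring
  have hrem : |(fwdDiff s)^[k] rem 0| ≤ 2^k * M * R^(k+1) * h^(k+1) / k.factorial := by
    rw [fwdDiff_iter_eq_sum_shift]
    calc |∑ j ∈ Finset.range (k+1), ((-1:ℤ)^(k-j) * (k.choose j) : ℤ) • rem (0 + j • s)|
        ≤ ∑ j ∈ Finset.range (k+1), |((-1:ℤ)^(k-j) * (k.choose j) : ℤ) • rem (0 + j • s)| :=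
          Finset.abs_sum_le_sum_abs _ _
      _ ≤ ∑ j ∈ Finset.range (k+1), (k.choose j : ℝ) * (M * R^(k+1) * h^(k+1) / k.factorial) := by
          refine Finset.sum_le_sum fun j hj => ?_
          rw [zsmul_eq_mul]
          push_cast
          rw [abs_mul, abs_mul, abs_pow, abs_neg, abs_one, one_pow, one_mul, Nat.abs_cast]
          have : (0:ℝ) + (j:ℝ) * s = (j:ℝ) * s := by rw [zero_add]
          rw [zero_add] at *
          have hb := hrem_pt j (Nat.lt_succ_iff.mp (Finset.mem_range.mp hj))
          have : rem ((j:ℕ) • s) = rem ((j:ℝ) * s) := by norm_num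
          rw [this]
          exact mul_le_mul_of_nonneg_left hb (Nat.cast_nonneg _)
      _ = (∑ j ∈ Finset.range (k+1), (k.choose j : ℝ)) * (M * R^(k+1) * h^(k+1) / k.factorial) := by
          rw [← Finset.sum_mul]
      _ = 2^k * M * R^(k+1) * h^(k+1) / k.factorial := by
          have := Nat.sum_range_choose k
          have hcast : (∑ j ∈ Finset.range (k+1), (k.choose j : ℝ)) = (2:ℝ)^k := by
            exact_mod_cast congrArg (Nat.cast : ℕ → ℝ) this
          rw [hcast]; ring
  -- combine
  have hEq : (fwdDiff s)^[k] (fun t => σ (b+t)) 0 = c * s^k + (fwdDiff s)^[k] rem 0 := by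
    rw [hsplit, fwdDiff_iter_add, Pi.add_apply, hP]
  rw [hEq]
  have hck : c * h^k ≠ 0 := mul_ne_zero hc0 (by positivity)
  have key : (1/(c * h^k)) * (c * s^k + (fwdDiff s)^[k] rem 0) - u^k
      = (fwdDiff s)^[k] rem 0 / (c * h^k) := by
    field_simp
    rw [hsdef]
    ring
  rw [key, abs_div, abs_mul]
  rw [div_le_iff₀ (by positivity)]
  have hhk : |h^k| = h^k := abs_of_nonneg (by positivity)
  rw [hhk]
  calc |(fwdDiff s)^[k] rem 0| ≤ 2^k * M * R^(k+1) * h^(k+1) / k.factorial := hrem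
    _ = (2^k * M * R^(k+1) / k.factorial) * h * h^k := by rw [pow_succ]; ring
    _ = (2^k * M * R^(k+1) / k.factorial) / |c| * h * (|c| * h^k) := by
        have habs0 : |c| ≠ 0 := abs_ne_zero.mpr hc0
        field_simp
open Finset Submodule

noncomputable section

instance UA.compactK (d : ℕ) : CompactSpace (Set.Icc (0 : Fin d → ℝ) 1) :=
  isCompact_iff_compactSpace.mp isCompact_Icc

def UA.netSet (σ : ℝ → ℝ) (d : ℕ) : Set C(Set.Icc (0 : Fin d → ℝ) 1, ℝ) :=
  {g | ∃ (w : Fin d → ℝ) (b : ℝ), ∀ x : Set.Icc (0 : Fin d → ℝ) 1,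
    g x = σ (∑ j, w j * (x : Fin d → ℝ) j + b)}

def UA.netFun (σ : ℝ → ℝ) (hσc : Continuous σ) (d : ℕ) (w : Fin d → ℝ) (b : ℝ) :
    C(Set.Icc (0 : Fin d → ℝ) 1, ℝ) :=
  ⟨fun x => σ (∑ j, w j * (x : Fin d → ℝ) j + b),
    hσc.comp ((continuous_finset_sum _ fun j _ => continuous_const.mul
      ((continuous_apply j).comp continuous_subtype_val)).add continuous_const)⟩

lemma UA.netFun_mem (σ : ℝ → ℝ) (hσc : Continuous σ) (d : ℕ) (w : Fin d → ℝ) (b : ℝ) :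
    UA.netFun σ hσc d w b ∈ UA.netSet σ d := ⟨w, b, fun _ => rfl⟩

def UA.powFun (d k : ℕ) (w : Fin d → ℝ) : C(Set.Icc (0 : Fin d → ℝ) 1, ℝ) :=
  ⟨fun x => (∑ j, w j * (x : Fin d → ℝ) j)^k,
    (continuous_finset_sum _ fun j _ => continuous_const.mul
      ((continuous_apply j).comp continuous_subtype_val)).pow k⟩

lemma UA.pow_mem (σ : ℝ → ℝ) (hσ : ContDiff ℝ (⊤:ℕ∞) σ)
    (hnp : ¬ ∃ p : Polynomial ℝ, ∀ t : ℝ, σ t = p.eval t) (d k : ℕ) (w : Fin d → ℝ) :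
    UA.powFun d k w ∈ (span ℝ (UA.netSet σ d)).topologicalClosure := by
  obtain ⟨b, hb⟩ := UA.exists_deriv_ne σ hσ hnp k
  set c := iteratedDeriv k σ b with hcdef
  set U := ∑ j, |w j| with hUdef
  have hU0 : (0:ℝ) ≤ U := Finset.sum_nonneg fun j _ => abs_nonneg _
  set R := (k:ℝ) * U + 1 with hRdef
  have hR0 : (0:ℝ) < R := by positivity
  have hcont : ContinuousOn (iteratedDeriv (k+1) σ) (Set.Icc (b-R) (b+R)) :=
    (hσ.continuous_iteratedDeriv (k+1) (by exact_mod_cast le_top)).continuousOn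
  obtain ⟨M0, hM0⟩ := isCompact_Icc.exists_bound_of_continuousOn hcont
  set M := max M0 0 with hMdef
  have hMnn : (0:ℝ) ≤ M := le_max_right _ _
  have hM : ∀ y ∈ Set.Icc (b-R) (b+R), |iteratedDeriv (k+1) σ y| ≤ M := fun y hy =>
    le_trans (le_of_eq (Real.norm_eq_abs _).symm) (le_trans (hM0 y hy) (le_max_left _ _))
  have hux : ∀ x : Set.Icc (0:Fin d → ℝ) 1, |∑ j, w j * (x : Fin d → ℝ) j| ≤ U := by
    intro x
    refine le_trans (Finset.abs_sum_le_sum_abs _ _) (Finset.sum_le_sum fun j _ => ?_)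
    rw [abs_mul]
    have h0 : (0:ℝ) ≤ (x : Fin d → ℝ) j := by have := x.2.1; exact this j
    have h1 : (x : Fin d → ℝ) j ≤ 1 := by have := x.2.2; exact this j
    calc |w j| * |(x : Fin d → ℝ) j| ≤ |w j| * 1 := by
          apply mul_le_mul_of_nonneg_left _ (abs_nonneg _)
          rw [abs_of_nonneg h0]; exact h1
      _ = |w j| := mul_one _
  rw [← SetLike.mem_coe, Submodule.topologicalClosure_coe, Metric.mem_closure_iff]
  intro ε hε
  set Cb := (2^k * M * R^(k+1) / k.factorial) / |c| with hCbdef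
  have hCb0 : 0 ≤ Cb := by positivity
  set h := min 1 (ε / (2 * (Cb + 1))) with hhdef
  have hh0 : 0 < h := lt_min one_pos (by positivity)
  have hh1 : h ≤ 1 := min_le_left _ _
  refine ⟨(1/(c * h^k)) • ∑ j ∈ Finset.range (k+1),
    ((-1:ℝ)^(k-j) * (k.choose j)) • UA.netFun σ hσ.continuous d (((j:ℝ)*h) • w) b, ?_, ?_⟩
  · exact SetLike.mem_coe.mpr (Submodule.smul_mem _ _ (Submodule.sum_mem _ fun j _ =>
      Submodule.smul_mem _ _ (Submodule.subset_span (UA.netFun_mem σ hσ.continuous d _ b))))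
  · have hptwise : ∀ x : Set.Icc (0:Fin d → ℝ) 1,
        dist (UA.powFun d k w x) (((1/(c * h^k)) • ∑ j ∈ Finset.range (k+1),
          ((-1:ℝ)^(k-j) * (k.choose j)) • UA.netFun σ hσ.continuous d (((j:ℝ)*h) • w) b) x)
          ≤ Cb * h := by
      intro x
      set u := ∑ j, w j * (x : Fin d → ℝ) j with hu
      have hval : (((1/(c * h^k)) • ∑ j ∈ Finset.range (k+1),
          ((-1:ℝ)^(k-j) * (k.choose j)) • UA.netFun σ hσ.continuous d (((j:ℝ)*h) • w) b) x)
          = (1/(c * h^k)) * (fwdDiff (h*u))^[k] (fun t => σ (b+t)) 0 := by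
        rw [fwdDiff_iter_eq_sum_shift]
        simp only [ContinuousMap.smul_apply, ContinuousMap.sum_apply, smul_eq_mul]
        congr 1
        refine Finset.sum_congr rfl fun j _ => ?_
        rw [zsmul_eq_mul]
        push_cast
        congr 1
        rw [zero_add, nsmul_eq_mul]
        show σ (∑ l, (((j:ℝ)*h) • w) l * (x : Fin d → ℝ) l + b) = σ (b + (j:ℝ) * (h * u))
        have hlin : ∑ l, (((j:ℝ)*h) • w) l * (x : Fin d → ℝ) l = (j:ℝ) * (h * u) := by
          rw [hu, Finset.mul_sum, Finset.mul_sum]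
          exact Finset.sum_congr rfl fun l _ => by simp only [Pi.smul_apply, smul_eq_mul]; ring
        rw [hlin, add_comm]
      rw [Real.dist_eq, hval]
      have hk : (k:ℝ) * |u| ≤ R := by
        calc (k:ℝ) * |u| ≤ (k:ℝ) * U := by
              apply mul_le_mul_of_nonneg_left (hux x) (Nat.cast_nonneg k)
          _ ≤ R := by rw [hRdef]; linarith
      have hest := UA.key_estimate σ hσ k b R M hb hR0 hMnn hM u h hh0 hh1 hk
      have hpow : UA.powFun d k w x = u^k := rfl
      rw [hpow, abs_sub_comm]
      exact hest
    have hCbh : Cb * h ≤ ε/2 := by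
      have h2 : h ≤ ε / (2*(Cb+1)) := min_le_right _ _
      calc Cb * h ≤ Cb * (ε/(2*(Cb+1))) := mul_le_mul_of_nonneg_left h2 hCb0
        _ = (Cb*ε)/(2*(Cb+1)) := by ring
        _ ≤ ε/2 := by
            rw [div_le_div_iff₀ (by positivity) (by norm_num)]
            nlinarith [hε.le, hCb0]
    have hd : dist (UA.powFun d k w) _ ≤ ε/2 :=
      (ContinuousMap.dist_le (by positivity)).mpr (fun x => le_trans (hptwise x) hCbh)
    exact lt_of_le_of_lt hd (half_lt_self hε)
def UA.monoFun (d k : ℕ) (l : Fin k → Fin d) : C(Set.Icc (0 : Fin d → ℝ) 1, ℝ) :=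
  ⟨fun x => ∏ i, (x : Fin d → ℝ) (l i),
    continuous_finset_prod _ fun i _ => (continuous_apply (l i)).comp continuous_subtype_val⟩

def UA.coordFun (d : ℕ) (j : Fin d) : C(Set.Icc (0 : Fin d → ℝ) 1, ℝ) :=
  ⟨fun x => (x : Fin d → ℝ) j, (continuous_apply j).comp continuous_subtype_val⟩

lemma UA.mono_mem (σ : ℝ → ℝ) (hσ : ContDiff ℝ (⊤:ℕ∞) σ)
    (hnp : ¬ ∃ p : Polynomial ℝ, ∀ t : ℝ, σ t = p.eval t) (d k : ℕ) (l : Fin k → Fin d) :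
    UA.monoFun d k l ∈ (span ℝ (UA.netSet σ d)).topologicalClosure := by
  classical
  have key : (k.factorial : ℝ) • UA.monoFun d k l
      = ∑ S ∈ (univ : Finset (Fin k)).powerset, ((-1:ℝ)^(k - S.card)) •
          UA.powFun d k (fun j => ((S.filter fun i => l i = j).card : ℝ)) := by
    ext x
    simp only [ContinuousMap.smul_apply, ContinuousMap.sum_apply, smul_eq_mul]
    have hpol := UA.polarization k (fun i => (x : Fin d → ℝ) (l i))
    rw [show ((k.factorial : ℝ) * (UA.monoFun d k l) x) = (k.factorial : ℝ) * ∏ i, (x : Fin d → ℝ) (l i) from rfl]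
    rw [hpol]
    refine Finset.sum_congr rfl fun S _ => ?_
    congr 2
    show ∑ i ∈ S, (x : Fin d → ℝ) (l i)
        = ∑ j, ((S.filter fun i => l i = j).card : ℝ) * (x : Fin d → ℝ) j
    rw [← Finset.sum_fiberwise_of_maps_to (fun i _ => Finset.mem_univ (l i))
      (fun i => (x : Fin d → ℝ) (l i))]
    refine Finset.sum_congr rfl fun j _ => ?_
    rw [Finset.sum_congr rfl (fun i hi => by rw [(Finset.mem_filter.mp hi).2])]
    rw [Finset.sum_const, nsmul_eq_mul]
  have hmem : ((k.factorial : ℝ)) • UA.monoFun d k l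
      ∈ (span ℝ (UA.netSet σ d)).topologicalClosure := by
    rw [key]
    exact Submodule.sum_mem _ fun S _ => Submodule.smul_mem _ _ (UA.pow_mem σ hσ hnp d k _)
  have hfac : (k.factorial : ℝ) ≠ 0 := by positivity
  have := Submodule.smul_mem (span ℝ (UA.netSet σ d)).topologicalClosure
    ((k.factorial : ℝ))⁻¹ hmem
  rwa [inv_smul_smul₀ hfac] at this
/-- Universal approximation: a smooth, non-polynomial activation function yields
shallow networks that approximate every continuous function on the cube `[0,1]^d`
to within any `ε > 0` in the supremum norm. -/
theorem universal_approximation_smooth_nonpoly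
    (σ : ℝ → ℝ) (hσ : ContDiff ℝ (⊤ : ℕ∞) σ)
    (hnotpoly : ¬ ∃ p : Polynomial ℝ, ∀ t : ℝ, σ t = p.eval t) :
    ∀ d : ℕ, 1 ≤ d →
      ∀ f : (Fin d → ℝ) → ℝ, ContinuousOn f (Set.Icc (0 : Fin d → ℝ) 1) →
        ∀ ε : ℝ, 0 < ε →
          ∃ (m : ℕ), 1 ≤ m ∧
            ∃ (a : Fin m → ℝ) (w : Fin m → Fin d → ℝ) (b : Fin m → ℝ),
              ∀ x ∈ Set.Icc (0 : Fin d → ℝ) 1,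
                |f x - ∑ i : Fin m, a i * σ (∑ j : Fin d, w i j * x j + b i)| ≤ ε := by
  intro d _hd f hf ε hε
  have hσ' : ContDiff ℝ (⊤:ℕ∞) σ := hσ.of_le (by simp)
  set K := Set.Icc (0 : Fin d → ℝ) 1
  set S := (span ℝ (UA.netSet σ d)).topologicalClosure with hSdef
  -- the subalgebra generated by coordinates
  set A : Subalgebra ℝ C(K, ℝ) := Algebra.adjoin ℝ (Set.range (UA.coordFun d)) with hAdef
  have hsep : A.SeparatesPoints := by
    intro x y hxy
    have : (x : Fin d → ℝ) ≠ (y : Fin d → ℝ) := fun h => hxy (Subtype.ext h)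
    obtain ⟨j, hj⟩ : ∃ j, (x : Fin d → ℝ) j ≠ (y : Fin d → ℝ) j := by
      by_contra hc; push_neg at hc; exact this (funext hc)
    exact ⟨UA.coordFun d j, ⟨UA.coordFun d j,
      Algebra.subset_adjoin ⟨j, rfl⟩, rfl⟩, hj⟩
  -- A is contained in the closure S
  have hAle : Subalgebra.toSubmodule A ≤ S := by
    rw [hAdef, Algebra.adjoin_eq_span, Submodule.span_le]
    intro g hg
    have hrep : ∃ (k : ℕ) (l : Fin k → Fin d), g = UA.monoFun d k l := by
      refine Submonoid.closure_induction (fun g' hg' => ?_) ?_ ?_ hg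
      · obtain ⟨j, rfl⟩ := hg'
        refine ⟨1, fun _ => j, ?_⟩
        ext x; simp [UA.coordFun, UA.monoFun]
      · refine ⟨0, Fin.elim0, ?_⟩
        ext x; simp [UA.monoFun]
      · rintro g₁ g₂ _ _ ⟨k₁, l₁, rfl⟩ ⟨k₂, l₂, rfl⟩
        refine ⟨k₁ + k₂, Fin.append l₁ l₂, ?_⟩
        ext x
        simp only [ContinuousMap.mul_apply, UA.monoFun, ContinuousMap.coe_mk]
        rw [Fin.prod_univ_add]
        congr 1
        · exact Finset.prod_congr rfl fun i _ => by rw [Fin.append_left]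
        · exact Finset.prod_congr rfl fun i _ => by rw [Fin.append_right]
    obtain ⟨k, l, rfl⟩ := hrep
    exact UA.mono_mem σ hσ' hnotpoly d k l
  -- Stone-Weierstrass
  set F : C(K, ℝ) := ⟨K.restrict f, hf.restrict⟩ with hFdef
  obtain ⟨g, hg⟩ := ContinuousMap.exists_mem_subalgebra_near_continuousMap_of_separatesPoints
    A hsep F (ε/2) (half_pos hε)
  have hgS : (g : C(K, ℝ)) ∈ S := hAle g.2
  rw [hSdef, ← SetLike.mem_coe, Submodule.topologicalClosure_coe,
    Metric.mem_closure_iff] at hgS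
  obtain ⟨y, hyN, hygdist⟩ := hgS (ε/2) (half_pos hε)
  have hdistFy : dist F y < ε := by
    have h1 : dist F (g : C(K,ℝ)) < ε/2 := by
      rw [dist_eq_norm, norm_sub_rev]; exact hg
    calc dist F y ≤ dist F (g : C(K,ℝ)) + dist (g : C(K,ℝ)) y := dist_triangle _ _ _
      _ < ε/2 + ε/2 := add_lt_add h1 hygdist
      _ = ε := add_halves ε
  rw [SetLike.mem_coe, mem_span_set'] at hyN
  obtain ⟨m, cc, vv, hsum⟩ := hyN
  have hv : ∀ i : Fin m, ∃ wb : (Fin d → ℝ) × ℝ, ∀ x : K,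
      (vv i : C(K, ℝ)) x = σ (∑ j, wb.1 j * (x : Fin d → ℝ) j + wb.2) := by
    intro i
    obtain ⟨w, b, hwb⟩ := (vv i).2
    exact ⟨(w, b), hwb⟩
  choose wb hwb using hv
  rcases Nat.eq_zero_or_pos m with hm | hm
  · -- y = 0
    subst hm
    have hy0 : y = 0 := by rw [← hsum]; simp
    rw [hy0] at hdistFy
    refine ⟨1, le_refl 1, fun _ => 0, fun _ => 0, fun _ => 0, fun x hx => ?_⟩
    have hfx : f x = F ⟨x, hx⟩ := rfl
    have h4 := ContinuousMap.dist_apply_le_dist (f := F) (g := (0:C(K,ℝ))) ⟨x, hx⟩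
    rw [hfx]
    simp only [zero_mul, Finset.sum_const_zero]
    rw [sub_zero]
    calc |F ⟨x,hx⟩| = dist (F ⟨x,hx⟩) ((0:C(K,ℝ)) ⟨x,hx⟩) := by simp [Real.dist_eq]
      _ ≤ dist F 0 := h4
      _ ≤ ε := le_of_lt hdistFy
  · refine ⟨m, hm, cc, fun i => (wb i).1, fun i => (wb i).2, fun x hx => ?_⟩
    have hfx : f x = F ⟨x, hx⟩ := rfl
    have hyx : y ⟨x, hx⟩ = ∑ i : Fin m, cc i * σ (∑ j, (wb i).1 j * x j + (wb i).2) := by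
      rw [← hsum]
      rw [ContinuousMap.sum_apply]
      refine Finset.sum_congr rfl fun i _ => ?_
      rw [ContinuousMap.smul_apply, smul_eq_mul, hwb i ⟨x, hx⟩]
    rw [hfx, ← hyx]
    calc |F ⟨x,hx⟩ - y ⟨x,hx⟩| = dist (F ⟨x,hx⟩) (y ⟨x,hx⟩) := (Real.dist_eq _ _).symm
      _ ≤ dist F y := ContinuousMap.dist_apply_le_dist _
      _ ≤ ε := le_of_lt hdistFy

end
end
end

section
/- Let σ : ℝ → ℝ be continuous, bounded, and sigmoidal, i.e., σ(t) → 1 as t → +∞ and σ(t) → 0 as t → −∞. Then for every dimension d ≥ 1, the set of shallow neural network functions x ↦ ∑_{i=1}^m a_i σ(w_i · x + b_i) (over all m ≥ 1, a_i, b_i ∈ ℝ, w_i ∈ ℝ^d) is dense in the space C([0,1]^d, ℝ) of continuous real-valued functions on [0,1]^d equipped with the supremum norm. -/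
/-!
A bounded sigmoidal `σ` with a steep slope is within `η` of the Heaviside step outside a small
window around its centre. Summing such steep sigmoids, one per jump of the staircase interpolating
a uniformly continuous `f : ℝ → ℝ` on a grid of mesh `h`, with the jumps placed at the midpoints
of the grid, approximates `f` uniformly on an interval: at any point only one jump lies inside its
window, and that jump is small. Composing with affine forms `x ↦ w ⬝ᵥ x + c` puts every ridge
function `cos (w ⬝ᵥ x + c)` in the closure of the networks. By
`cos α * cos β = (cos (α + β) + cos (α - β)) / 2` these ridge functions span a subalgebra, which
separates points, so it is dense by Stone–Weierstrass.
-/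

open Set Filter Topology

theorem exists_abs_sigmoid_sub_le {σ : ℝ → ℝ} (htop : Tendsto σ atTop (𝓝 1))
    (hbot : Tendsto σ atBot (𝓝 0)) {η : ℝ} (hη : 0 < η) :
    ∃ T, 0 ≤ T ∧ ∀ s, (T ≤ s → |σ s - 1| ≤ η) ∧ (s ≤ -T → |σ s| ≤ η) := by
  obtain ⟨T₁, h₁⟩ := eventually_atTop.1 (htop.eventually (Metric.closedBall_mem_nhds 1 hη))
  obtain ⟨T₂, h₂⟩ := eventually_atBot.1 (hbot.eventually (Metric.closedBall_mem_nhds 0 hη))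
  refine ⟨max 0 (max T₁ (-T₂)), le_max_left _ _, fun s => ⟨fun hs => ?_, fun hs => ?_⟩⟩
  · have : T₁ ≤ s := (le_max_left _ _).trans ((le_max_right _ _).trans hs)
    simpa [Real.dist_eq] using h₁ s this
  · have : s ≤ T₂ := by linarith [le_max_right T₁ (-T₂), le_max_right 0 (max T₁ (-T₂))]
    simpa [Real.dist_eq] using h₂ s this

theorem abs_sub_staircase_le {y e : ℕ → ℝ} {e₀ δ η M : ℝ} {j N : ℕ} (hjN : j ≤ N)
    (hy : ∀ k, |y (k + 1) - y k| ≤ δ) (he₀ : |e₀ - 1| ≤ η)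
    (hlt : ∀ k < j, |e k - 1| ≤ η) (hgt : ∀ k, j < k → |e k| ≤ η) (hj : |e j| ≤ M) :
    |y j - (y 0 * e₀ + ∑ k ∈ Finset.range N, (y (k + 1) - y k) * e k)|
      ≤ |y 0| * η + δ * (N * η + M) := by
  have hη : 0 ≤ η := (abs_nonneg _).trans he₀
  have hδ : 0 ≤ δ := (abs_nonneg _).trans (hy 0)
  have hM : 0 ≤ M := (abs_nonneg _).trans hj
  have hstep : ∀ k, |(if k < j then 1 else 0) - e k| ≤ η + if k = j then M else 0 := by
    intro k
    rcases lt_trichotomy k j with hk | rfl | hk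
    · simpa [hk, hk.ne, abs_sub_comm] using hlt k hk
    · simpa using hj.trans (le_add_of_nonneg_left hη)
    · simpa [hk.not_gt, hk.ne'] using hgt k hk
  have htel :
      y j = y 0 + ∑ k ∈ Finset.range N, (y (k + 1) - y k) * (if k < j then 1 else 0) := by
    have : (Finset.range N).filter (· < j) = Finset.range j := by
      ext
      simp only [Finset.mem_filter, Finset.mem_range, and_iff_right_iff_imp]
      omega
    simp only [mul_ite, mul_one, mul_zero]
    rw [← Finset.sum_filter, this, Finset.sum_range_sub]
    ring
  calc |y j - (y 0 * e₀ + ∑ k ∈ Finset.range N, (y (k + 1) - y k) * e k)|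
      = |y 0 * (1 - e₀) + ∑ k ∈ Finset.range N,
          (y (k + 1) - y k) * ((if k < j then 1 else 0) - e k)| := by
        rw [htel]
        simp only [mul_sub, Finset.sum_sub_distrib]
        ring_nf
    _ ≤ |y 0| * η + ∑ k ∈ Finset.range N, δ * (η + if k = j then M else 0) := by
        refine (abs_add_le _ _).trans (add_le_add ?_ ?_)
        · rw [abs_mul, abs_sub_comm]
          gcongr
        · refine (Finset.abs_sum_le_sum_abs _ _).trans (Finset.sum_le_sum fun k _ => ?_)
          rw [abs_mul]
          exact mul_le_mul (hy k) (hstep k) (abs_nonneg _) hδ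
    _ ≤ |y 0| * η + δ * (N * η + M) := by
        rw [← Finset.mul_sum, Finset.sum_add_distrib, Finset.sum_ite_eq', Finset.sum_const,
          Finset.card_range, nsmul_eq_mul]
        gcongr
        split_ifs <;> simp [hM]

theorem nat_floor_div_mul_le_and_lt {x s : ℝ} (hx : 0 ≤ x) (hs : 0 < s) :
    ⌊x / s⌋₊ * s ≤ x ∧ x < (⌊x / s⌋₊ + 1) * s :=
  ⟨(le_div_iff₀ hs).1 (Nat.floor_le (div_nonneg hx hs.le)),
    (div_lt_iff₀ hs).1 (Nat.lt_floor_add_one _)⟩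

def neuron (σ : C(ℝ, ℝ)) (a b : ℝ) : C(ℝ, ℝ) :=
  σ.comp ⟨fun t => a * t + b, by fun_prop⟩

@[simp]
theorem neuron_apply (σ : C(ℝ, ℝ)) (a b t : ℝ) : neuron σ a b t = σ (a * t + b) := rfl

def neuronSpan (σ : C(ℝ, ℝ)) : Submodule ℝ C(ℝ, ℝ) :=
  Submodule.span ℝ (range fun p : ℝ × ℝ => neuron σ p.1 p.2)

theorem neuron_mem_neuronSpan (σ : C(ℝ, ℝ)) (a b : ℝ) : neuron σ a b ∈ neuronSpan σ :=
  Submodule.subset_span ⟨(a, b), rfl⟩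

/-- Sigmoid approximation of the staircase through the samples `y k` at the nodes `A + k * step`:
the jump `y (k + 1) - y k` is placed at the midpoint `A + (k + 1/2) * step` and the initial value
`y 0` at `A - step / 2`, with the slope chosen so that the sigmoid's argument is `T` at distance
`step / 2` from a jump. -/
noncomputable def staircase (σ : C(ℝ, ℝ)) (y : ℕ → ℝ) (A step T : ℝ) (N : ℕ) : C(ℝ, ℝ) :=
  y 0 • neuron σ (2 * T / step) (-(2 * T / step * (A - step / 2))) +
    ∑ k ∈ Finset.range N,
      (y (k + 1) - y k) • neuron σ (2 * T / step) (-(2 * T / step * (A + (k + 1 / 2) * step)))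

theorem staircase_mem_neuronSpan (σ : C(ℝ, ℝ)) (y : ℕ → ℝ) (A step T : ℝ) (N : ℕ) :
    staircase σ y A step T N ∈ neuronSpan σ :=
  add_mem (Submodule.smul_mem _ _ (neuron_mem_neuronSpan _ _ _))
    (Submodule.sum_mem _ fun _ _ => Submodule.smul_mem _ _ (neuron_mem_neuronSpan _ _ _))

theorem abs_sub_staircase_apply_le {σ : C(ℝ, ℝ)} {y : ℕ → ℝ} {A step T δ η M t : ℝ} {N : ℕ}
    (hstep : 0 < step) (hT : 0 ≤ T) (hσ : ∀ s, (T ≤ s → |σ s - 1| ≤ η) ∧ (s ≤ -T → |σ s| ≤ η))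
    (hM : ∀ s, |σ s| ≤ M) (hy : ∀ k, |y (k + 1) - y k| ≤ δ) (hAt : A ≤ t)
    (htN : t - A ≤ N * step) :
    |y ⌊(t - A) / step⌋₊ - staircase σ y A step T N t| ≤ |y 0| * η + δ * (N * η + M) := by
  set j := ⌊(t - A) / step⌋₊
  obtain ⟨hj_le, hj_lt⟩ := nat_floor_div_mul_le_and_lt (sub_nonneg.2 hAt) hstep
  have hslope : 0 ≤ 2 * T / step := by positivity
  have hT_eq : 2 * T / step * (step / 2) = T := by field_simp
  have hright : ∀ c, c + step / 2 ≤ t → |σ (2 * T / step * t + -(2 * T / step * c)) - 1| ≤ η :=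
    fun c hc => (hσ _).1 (by nlinarith)
  have hleft : ∀ c, t + step / 2 ≤ c → |σ (2 * T / step * t + -(2 * T / step * c))| ≤ η :=
    fun c hc => (hσ _).2 (by nlinarith)
  have hjN : j ≤ N := by
    have : (j : ℝ) ≤ N := le_of_mul_le_mul_right (hj_le.trans htN) hstep
    exact_mod_cast this
  have := abs_sub_staircase_le (e := fun k => σ (2 * T / step * t + -(2 * T / step *
      (A + (k + 1 / 2) * step)))) hjN hy (hright (A - step / 2) (by linarith))
    (fun k hk => hright _ (by
      have : (k : ℝ) + 1 ≤ j := by exact_mod_cast hk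
      nlinarith))
    (fun k hk => hleft _ (by
      have : (j : ℝ) + 1 ≤ k := by exact_mod_cast hk
      nlinarith)) (hM _)
  simpa [staircase] using this

theorem exists_mem_neuronSpan_abs_sub_le (σ : C(ℝ, ℝ)) (hbdd : ∃ M : ℝ, ∀ t : ℝ, |σ t| ≤ M)
    (htop : Tendsto σ atTop (𝓝 1)) (hbot : Tendsto σ atBot (𝓝 0)) {f : ℝ → ℝ}
    (hf : UniformContinuous f) (A B : ℝ) {ε : ℝ} (hε : 0 < ε) :
    ∃ g ∈ neuronSpan σ, ∀ t ∈ Icc A B, |f t - g t| ≤ ε := by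
  obtain ⟨M, hM⟩ := hbdd
  have hM0 : 0 ≤ M := (abs_nonneg _).trans (hM 0)
  set δ := ε / (2 * (M + 1))
  obtain ⟨h, hh, hfh⟩ := Metric.uniformContinuous_iff.1 hf δ (by positivity)
  set N := ⌈(B - A) / (h / 2)⌉₊
  set y : ℕ → ℝ := fun k => f (A + k * (h / 2))
  set η := ε / (2 * (|y 0| + N * δ + 1))
  obtain ⟨T, hT0, hT⟩ := exists_abs_sigmoid_sub_le htop hbot (η := η) (by positivity)
  refine ⟨staircase σ y A (h / 2) T N, staircase_mem_neuronSpan _ _ _ _ _ _,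
    fun t ⟨hAt, htB⟩ => ?_⟩
  have hclose : ∀ s r, |s - r| ≤ h / 2 → |f s - f r| ≤ δ := fun s r hsr =>
    (hfh (show dist s r < h by rw [Real.dist_eq]; linarith)).le
  have hy : ∀ k, |y (k + 1) - y k| ≤ δ := fun k => hclose _ _ (by
    rw [abs_le]; push_cast; constructor <;> nlinarith)
  have htN : t - A ≤ N * (h / 2) :=
    (div_le_iff₀ (by positivity)).1 ((div_le_div_of_nonneg_right (by linarith)
      (by positivity)).trans (Nat.le_ceil _))
  obtain ⟨hj_le, hj_lt⟩ := nat_floor_div_mul_le_and_lt (sub_nonneg.2 hAt) (half_pos hh)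
  have hsample : |f t - y ⌊(t - A) / (h / 2)⌋₊| ≤ δ :=
    hclose _ _ (by rw [abs_le]; constructor <;> linarith)
  have hstair := abs_sub_staircase_apply_le (half_pos hh) hT0 hT hM hy hAt htN
  have hδ : δ * (M + 1) = ε / 2 := by simp only [δ]; field_simp
  have hδ0 : 0 < δ := by positivity
  have hη : η * (|y 0| + N * δ + 1) = ε / 2 := by
    have : 0 < |y 0| + N * δ + 1 := by positivity
    simp only [η]
    field_simp
  have hη0 : 0 ≤ η := by positivity
  calc |f t - staircase σ y A (h / 2) T N t|
      ≤ δ + (|y 0| * η + δ * (N * η + M)) := by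
        have := abs_sub_le (f t) (y ⌊(t - A) / (h / 2)⌋₊) (staircase σ y A (h / 2) T N t)
        linarith
    _ ≤ ε := by linarith

section Ridge

variable {d : ℕ} (K : Set (Fin d → ℝ))

def shallowNetworks (σ : ℝ → ℝ) : Submodule ℝ C(K, ℝ) where
  carrier := {g | ∃ m, 1 ≤ m ∧ ∃ (a : Fin m → ℝ) (w : Fin m → Fin d → ℝ) (b : Fin m → ℝ),
    ∀ x : K, g x = ∑ i, a i * σ (w i ⬝ᵥ (x : Fin d → ℝ) + b i)}
  zero_mem' := ⟨1, le_rfl, 0, 0, 0, fun x => by simp⟩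
  add_mem' := by
    rintro f g ⟨m₁, hm₁, a₁, w₁, b₁, hf⟩ ⟨m₂, -, a₂, w₂, b₂, hg⟩
    refine ⟨m₁ + m₂, le_add_right hm₁, Fin.append a₁ a₂, Fin.append w₁ w₂, Fin.append b₁ b₂,
      fun x => ?_⟩
    simp [hf, hg, Fin.sum_univ_add]
  smul_mem' := by
    rintro r f ⟨m, hm, a, w, b, hf⟩
    refine ⟨m, hm, r • a, w, b, fun x => ?_⟩
    simp [hf, Finset.mul_sum, mul_assoc]

def ridge (φ : C(ℝ, ℝ)) (w : Fin d → ℝ) (c : ℝ) : C(K, ℝ) :=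
  φ.comp ⟨fun x => w ⬝ᵥ (x : Fin d → ℝ) + c, by fun_prop⟩

@[simp]
theorem ridge_apply (φ : C(ℝ, ℝ)) (w : Fin d → ℝ) (c : ℝ) (x : K) :
    ridge K φ w c x = φ (w ⬝ᵥ (x : Fin d → ℝ) + c) := rfl

variable {K}

theorem ridge_mem_shallowNetworks {σ g : C(ℝ, ℝ)} (hg : g ∈ neuronSpan σ) (w : Fin d → ℝ)
    (c : ℝ) : ridge K g w c ∈ shallowNetworks K σ := by
  induction hg using Submodule.span_induction with
  | mem g hg =>
    obtain ⟨⟨a, b⟩, rfl⟩ := hg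
    refine ⟨1, le_rfl, 1, fun _ => a • w, fun _ => a * c + b, fun x => ?_⟩
    simp [smul_dotProduct, mul_add, add_assoc]
  | zero => exact zero_mem _
  | add f g _ _ hf hg => exact add_mem hf hg
  | smul r g _ hg => exact Submodule.smul_mem _ r hg

theorem ridge_mem_closure_shallowNetworks [CompactSpace K] (σ : C(ℝ, ℝ))
    (hbdd : ∃ M : ℝ, ∀ t : ℝ, |σ t| ≤ M) (htop : Tendsto σ atTop (𝓝 1))
    (hbot : Tendsto σ atBot (𝓝 0)) {φ : C(ℝ, ℝ)} (hφ : UniformContinuous φ) (w : Fin d → ℝ)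
    (c : ℝ) : ridge K φ w c ∈ closure (shallowNetworks K σ : Set C(K, ℝ)) := by
  have hcpt : IsCompact (range fun x : K => w ⬝ᵥ (x : Fin d → ℝ) + c) :=
    isCompact_range (by fun_prop)
  obtain ⟨A, hA⟩ := hcpt.bddBelow
  obtain ⟨B, hB⟩ := hcpt.bddAbove
  rw [Metric.mem_closure_iff]
  intro ε hε
  obtain ⟨g, hg, hφg⟩ :=
    exists_mem_neuronSpan_abs_sub_le σ hbdd htop hbot hφ A B (half_pos hε)
  refine ⟨ridge K g w c, ridge_mem_shallowNetworks hg w c, ?_⟩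
  calc dist (ridge K φ w c) (ridge K g w c) ≤ ε / 2 :=
        (ContinuousMap.dist_le (half_pos hε).le).2 fun x => hφg _ ⟨hA ⟨x, rfl⟩, hB ⟨x, rfl⟩⟩
    _ < ε := half_lt_self hε

end Ridge

theorem exists_cos_mul_add_ne {a b : ℝ} (hab : a ≠ b) :
    ∃ s c, Real.cos (s * a + c) ≠ Real.cos (s * b + c) := by
  have hba : b - a ≠ 0 := sub_ne_zero.2 hab.symm
  refine ⟨1 / (b - a), -a / (b - a), fun h => ?_⟩
  have h₀ : 1 / (b - a) * a + -a / (b - a) = 0 := by field_simp; ring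
  have h₁ : 1 / (b - a) * b + -a / (b - a) = 1 := by field_simp; ring
  rw [h₀, h₁] at h
  exact zero_ne_one
    (Real.injOn_cos ⟨le_rfl, Real.pi_pos.le⟩ ⟨zero_le_one, by linarith [Real.pi_gt_three]⟩ h)

section CosRidge

variable {d : ℕ} (K : Set (Fin d → ℝ))

noncomputable def cosRidge (w : Fin d → ℝ) (c : ℝ) : C(K, ℝ) :=
  ridge K ⟨Real.cos, Real.continuous_cos⟩ w c

def cosRidgeSpan : Submodule ℝ C(K, ℝ) :=
  Submodule.span ℝ (range fun p : (Fin d → ℝ) × ℝ => cosRidge K p.1 p.2)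

variable {K}

theorem cosRidge_mem_cosRidgeSpan (w : Fin d → ℝ) (c : ℝ) : cosRidge K w c ∈ cosRidgeSpan K :=
  Submodule.subset_span ⟨(w, c), rfl⟩

theorem cosRidge_mul_cosRidge (w₁ w₂ : Fin d → ℝ) (c₁ c₂ : ℝ) :
    cosRidge K w₁ c₁ * cosRidge K w₂ c₂ =
      (1 / 2 : ℝ) • cosRidge K (w₁ + w₂) (c₁ + c₂) +
        (1 / 2 : ℝ) • cosRidge K (w₁ - w₂) (c₁ - c₂) := by
  ext x
  have hadd : (w₁ + w₂) ⬝ᵥ (x : Fin d → ℝ) + (c₁ + c₂) =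
      (w₁ ⬝ᵥ (x : Fin d → ℝ) + c₁) + (w₂ ⬝ᵥ (x : Fin d → ℝ) + c₂) := by
    rw [add_dotProduct]; ring
  have hsub : (w₁ - w₂) ⬝ᵥ (x : Fin d → ℝ) + (c₁ - c₂) =
      (w₁ ⬝ᵥ (x : Fin d → ℝ) + c₁) - (w₂ ⬝ᵥ (x : Fin d → ℝ) + c₂) := by
    rw [sub_dotProduct]; ring
  simp only [cosRidge, ContinuousMap.mul_apply, ContinuousMap.add_apply,
    ContinuousMap.smul_apply, ridge_apply, ContinuousMap.coe_mk, hadd, hsub, Real.cos_add,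
    Real.cos_sub, smul_eq_mul]
  ring

theorem mul_mem_cosRidgeSpan {f g : C(K, ℝ)} (hf : f ∈ cosRidgeSpan K)
    (hg : g ∈ cosRidgeSpan K) : f * g ∈ cosRidgeSpan K := by
  have hle : cosRidgeSpan K * cosRidgeSpan K ≤ cosRidgeSpan K := by
    rw [cosRidgeSpan, Submodule.span_mul_span, Submodule.span_le, Set.mul_subset_iff]
    rintro _ ⟨⟨w₁, c₁⟩, rfl⟩ _ ⟨⟨w₂, c₂⟩, rfl⟩
    rw [cosRidge_mul_cosRidge]
    exact add_mem (Submodule.smul_mem _ _ (cosRidge_mem_cosRidgeSpan _ _))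
      (Submodule.smul_mem _ _ (cosRidge_mem_cosRidgeSpan _ _))
  exact hle (Submodule.mul_mem_mul hf hg)

variable (K)

def cosRidgeAlgebra : Subalgebra ℝ C(K, ℝ) :=
  (cosRidgeSpan K).toSubalgebra
    (by convert cosRidge_mem_cosRidgeSpan (K := K) 0 0; ext; simp [cosRidge])
    fun _ _ => mul_mem_cosRidgeSpan

theorem cosRidgeAlgebra_separatesPoints : (cosRidgeAlgebra K).SeparatesPoints := by
  intro x y hxy
  obtain ⟨j, hj⟩ := Function.ne_iff.1 (Subtype.coe_ne_coe.2 hxy)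
  obtain ⟨s, c, hsc⟩ := exists_cos_mul_add_ne hj
  refine ⟨_, ⟨cosRidge K (Pi.single j s) c, cosRidge_mem_cosRidgeSpan _ _, rfl⟩, ?_⟩
  simpa [cosRidge, single_dotProduct] using hsc

theorem dense_cosRidgeSpan [CompactSpace K] : Dense (cosRidgeSpan K : Set C(K, ℝ)) := by
  have h := congrArg ((↑) : Subalgebra ℝ C(K, ℝ) → Set C(K, ℝ))
    (ContinuousMap.subalgebra_topologicalClosure_eq_top_of_separatesPoints _
      (cosRidgeAlgebra_separatesPoints K))
  rw [Subalgebra.topologicalClosure_coe, Algebra.coe_top] at h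
  exact dense_iff_closure_eq.2 h

end CosRidge

theorem dense_shallowNetworks {d : ℕ} (K : Set (Fin d → ℝ)) [CompactSpace K] (σ : C(ℝ, ℝ))
    (hbdd : ∃ M : ℝ, ∀ t : ℝ, |σ t| ≤ M) (htop : Tendsto σ atTop (𝓝 1))
    (hbot : Tendsto σ atBot (𝓝 0)) : Dense (shallowNetworks K σ : Set C(K, ℝ)) := by
  refine Dense.of_closure ((dense_cosRidgeSpan K).mono ?_)
  rw [← Submodule.topologicalClosure_coe]
  refine Submodule.span_le.2 (range_subset_iff.2 fun p => ?_)
  exact ridge_mem_closure_shallowNetworks σ hbdd htop hbot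
    Real.lipschitzWith_cos.uniformContinuous p.1 p.2

/-- Cybenko's theorem: for a continuous, bounded, sigmoidal activation `σ`
(`σ(t) → 1` as `t → ∞`, `σ(t) → 0` as `t → -∞`), the shallow neural networks
are dense in `C([0,1]^d, ℝ)` (with the supremum norm, which induces the
topology of `C(K, ℝ)` for compact `K`). -/
theorem universal_approximation_sigmoidal
    (σ : ℝ → ℝ) (hcont : Continuous σ)
    (hbdd : ∃ M : ℝ, ∀ t : ℝ, |σ t| ≤ M)
    (hsig_top : Filter.Tendsto σ Filter.atTop (nhds 1))
    (hsig_bot : Filter.Tendsto σ Filter.atBot (nhds 0)) :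
    ∀ d : ℕ, 1 ≤ d →
      Dense {g : C(Set.Icc (0 : Fin d → ℝ) 1, ℝ) |
        ∃ (m : ℕ), 1 ≤ m ∧
          ∃ (a : Fin m → ℝ) (w : Fin m → Fin d → ℝ) (b : Fin m → ℝ),
            ∀ x : Set.Icc (0 : Fin d → ℝ) 1,
              g x = ∑ i : Fin m, a i * σ (∑ j : Fin d, w i j * (x : Fin d → ℝ) j + b i)} :=
  fun _ _ => dense_shallowNetworks _ ⟨σ, hcont⟩ hbdd hsig_top hsig_bot
end
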